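/- arXiv:1512.01843 — 3 statements merged into one kernel-verified Lean document; each statement's English description precedes it below -/
import Mathlib

section
/- Let n be a circularly symmetric complex Gaussian random variable with variance σ², let a ∈ ℂ, and let c > 0. Then |E[n·exp(i·c·|a+n|²)]| = (σ²·c/(1+σ⁴c²))·|a|·exp(−σ²c²|a|²/(1+σ⁴c²)). -/
open Real MeasureTheory ProbabilityTheory Complex

/-- The circularly symmetric complex Gaussian distribution `CN(0, v)`:
real and imaginary parts are independent `N(0, v/2)`. -/
noncomputable def complexGaussian (v : ℝ) : Measure ℂ :=
  Measure.map (fun p : ℝ × ℝ => (p.1 : ℂ) + p.2 * Complex.I)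
    ((gaussianReal 0 (v / 2).toNNReal).prod (gaussianReal 0 (v / 2).toNNReal))

open scoped NNReal

/-!
Write `n = X + iY` with `X, Y` independent `N(0, v)`, `v = σ²/2`. Since
`|a + n|² = (Re a + X)² + (Im a + Y)²`, the integrand factors, and everything reduces to the
one-dimensional integrals `φ(t) = E[exp(ic(t + X)²)]` and `E[X exp(ic(t + X)²)]`. After
multiplying by the Gaussian density both are integrals of `exp` of a quadratic polynomial with
negative leading real part: the derivative of that exponential integrates to zero, which gives
`E[X exp(ic(t + X)²)] = 2icvt / (1 - 2icv) · φ(t)`, and completing the square gives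
`φ(s) φ(t) = (1 - 2icv)⁻¹ exp(ic(s² + t²) / (1 - 2icv))`. Hence
`E[n exp(ic|a + n|²)] = icσ²a / (1 - icσ²)² · exp(ic|a|² / (1 - icσ²))`, and taking the modulus
gives the formula.
-/

section LebesgueQuadratic

variable {b : ℂ}

lemma integrable_mul_cexp_quadratic (hb : b.re < 0) (c d : ℂ) :
    Integrable fun x : ℝ ↦ (x : ℂ) * cexp (b * x ^ 2 + c * x + d) := by
  refine ((integrable_cexp_quadratic' hb (c + 1) d).norm.add
    (integrable_cexp_quadratic' hb (c - 1) d).norm).mono' (by fun_prop) (.of_forall fun x ↦ ?_)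
  -- `|x| ≤ eˣ + e⁻ˣ` absorbs the factor `x` into two shifted quadratic exponentials
  have hx : |x| ≤ rexp x + rexp (-x) := by
    rcases abs_cases x with ⟨h, -⟩ | ⟨h, -⟩ <;>
      linarith [add_one_le_exp x, add_one_le_exp (-x), exp_pos x, exp_pos (-x)]
  have hplus :
      ‖cexp (b * x ^ 2 + (c + 1) * x + d)‖ = ‖cexp (b * x ^ 2 + c * x + d)‖ * rexp x := by
    rw [norm_exp, norm_exp, ← Real.exp_add]
    congr 1
    simp only [add_re, mul_re, one_re, ofReal_re, add_im, one_im, ofReal_im, mul_zero, sub_zero]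
    ring
  have hminus :
      ‖cexp (b * x ^ 2 + (c - 1) * x + d)‖ = ‖cexp (b * x ^ 2 + c * x + d)‖ * rexp (-x) := by
    rw [norm_exp, norm_exp, ← Real.exp_add]
    congr 1
    simp only [add_re, mul_re, sub_re, one_re, ofReal_re, sub_im, one_im, ofReal_im, mul_zero,
      sub_zero]
    ring
  calc ‖(x : ℂ) * cexp (b * x ^ 2 + c * x + d)‖
      = |x| * ‖cexp (b * x ^ 2 + c * x + d)‖ := by rw [norm_mul, norm_real, Real.norm_eq_abs]
    _ ≤ (rexp x + rexp (-x)) * ‖cexp (b * x ^ 2 + c * x + d)‖ := by gcongr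
    _ = ‖cexp (b * x ^ 2 + (c + 1) * x + d)‖ + ‖cexp (b * x ^ 2 + (c - 1) * x + d)‖ := by
      rw [hplus, hminus]; ring

lemma integral_mul_cexp_quadratic (hb : b.re < 0) (c d : ℂ) :
    ∫ x : ℝ, (x : ℂ) * cexp (b * x ^ 2 + c * x + d) =
      -c / (2 * b) * ∫ x : ℝ, cexp (b * x ^ 2 + c * x + d) := by
  have hb0 : b ≠ 0 := by rintro rfl; simp at hb
  have hderiv (x : ℝ) : HasDerivAt (fun x : ℝ ↦ cexp (b * x ^ 2 + c * x + d))
      (2 * b * ((x : ℂ) * cexp (b * x ^ 2 + c * x + d)) + c * cexp (b * x ^ 2 + c * x + d)) x := by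
    have := ((((hasDerivAt_pow 2 (x : ℂ)).const_mul b).add
      ((hasDerivAt_id (x : ℂ)).const_mul c)).add_const d).cexp.comp_ofReal
    simp only [Pi.add_apply, id_eq] at this
    convert this using 1
    push_cast
    ring
  have hX := integrable_mul_cexp_quadratic hb c d
  have hE := integrable_cexp_quadratic' hb c d
  have h0 := integral_eq_zero_of_hasDerivAt_of_integrable hderiv
    ((hX.const_mul _).add (hE.const_mul c)) hE
  rw [integral_add (hX.const_mul _) (hE.const_mul c), integral_const_mul, integral_const_mul] at h0
  rw [div_mul_eq_mul_div, eq_div_iff (mul_ne_zero two_ne_zero hb0)]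
  linear_combination h0

end LebesgueQuadratic

lemma gaussianPDFReal_smul_cexp_mul_add_sq (v : ℝ≥0) (z : ℂ) (t x : ℝ) :
    gaussianPDFReal 0 v x • cexp (z * (t + x) ^ 2) =
      (√(2 * π * v))⁻¹ • cexp ((z - 1 / (2 * v)) * x ^ 2 + 2 * z * t * x + z * t ^ 2) := by
  rw [gaussianPDFReal, mul_smul, Complex.real_smul, Complex.real_smul, Complex.real_smul,
    ofReal_exp, ← Complex.exp_add]
  congr 2
  push_cast
  ring

section GaussianQuadraticExp

variable {v : ℝ≥0} {z : ℂ}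

lemma re_sub_one_div_two_mul_neg (hv : v ≠ 0) (hz : 2 * v * z.re < 1) :
    (z - 1 / (2 * v)).re < 0 := by
  have hv : (0 : ℝ) < v := by simpa using pos_iff_ne_zero.mpr hv
  have : (1 / (2 * v) : ℂ) = ((1 / (2 * v) : ℝ) : ℂ) := by push_cast; rfl
  rw [sub_re, this, ofReal_re, sub_neg, lt_div_iff₀ (by positivity)]
  linarith

lemma one_sub_two_mul_ne_zero (hz : 2 * v * z.re < 1) : (1 - 2 * z * v : ℂ) ≠ 0 := by
  intro h
  have := congrArg re h
  simp only [sub_re, one_re, mul_re, re_ofNat, im_ofNat, zero_mul, sub_zero, ofReal_re, mul_im,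
    add_zero, ofReal_im, mul_zero, zero_re] at this
  linarith

lemma integral_mul_cexp_mul_add_sq_gaussianReal (hv : v ≠ 0) (hz : 2 * v * z.re < 1) (t : ℝ) :
    ∫ x, x * cexp (z * (t + x) ^ 2) ∂gaussianReal 0 v =
      2 * z * v * t / (1 - 2 * z * v) * ∫ x, cexp (z * (t + x) ^ 2) ∂gaussianReal 0 v := by
  simp_rw [integral_gaussianReal_eq_integral_smul hv, ← mul_smul_comm,
    gaussianPDFReal_smul_cexp_mul_add_sq, mul_smul_comm, integral_smul,
    integral_mul_cexp_quadratic (re_sub_one_div_two_mul_neg hv hz), mul_smul_comm]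
  have hv' : (v : ℂ) ≠ 0 := by exact_mod_cast hv
  have hw := one_sub_two_mul_ne_zero hz
  have hcoef : -(2 * z * t) / (2 * (z - 1 / (2 * v))) = 2 * z * v * t / (1 - 2 * z * v) := by
    rw [show (z - 1 / (2 * v) : ℂ) = -(1 - 2 * z * v) / (2 * v) by field_simp; ring]
    field_simp
  rw [hcoef]

-- Stated for a product of two integrals so that the two square roots `(π / -b) ^ (1 / 2)` coming
-- from `integral_cexp_quadratic` multiply to `π / -b`: no branch of `√` has to be identified.
lemma integral_cexp_mul_add_sq_gaussianReal_mul (hv : v ≠ 0) (hz : 2 * v * z.re < 1) (s t : ℝ) :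
    (∫ x, cexp (z * (s + x) ^ 2) ∂gaussianReal 0 v) *
        ∫ x, cexp (z * (t + x) ^ 2) ∂gaussianReal 0 v =
      (1 - 2 * z * v)⁻¹ * cexp (z * (s ^ 2 + t ^ 2) / (1 - 2 * z * v)) := by
  simp_rw [integral_gaussianReal_eq_integral_smul hv, gaussianPDFReal_smul_cexp_mul_add_sq,
    integral_smul, integral_cexp_quadratic (re_sub_one_div_two_mul_neg hv hz)]
  have hv' : (v : ℂ) ≠ 0 := by exact_mod_cast hv
  have hw := one_sub_two_mul_ne_zero hz
  have hb : (z - 1 / (2 * v) : ℂ) = -(1 - 2 * z * v) / (2 * v) := by field_simp; ring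
  have hsqrt : ((π / -(z - 1 / (2 * v))) ^ (1 / 2 : ℂ)) ^ 2 = 2 * π * v / (1 - 2 * z * v) := by
    have hne : (π / -(z - 1 / (2 * v)) : ℂ) ≠ 0 := by
      rw [hb, neg_div, neg_neg]
      exact div_ne_zero (by exact_mod_cast pi_ne_zero) (div_ne_zero hw (by simpa using hv'))
    rw [sq, ← cpow_add _ _ hne, add_halves, cpow_one, hb, neg_div, neg_neg, div_div_eq_mul_div]
    ring
  have hK : ((√(2 * π * v))⁻¹ : ℝ) ^ 2 = (2 * π * v)⁻¹ := by
    rw [inv_pow, sq_sqrt (by positivity)]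
  calc _ = (((√(2 * π * v))⁻¹ : ℝ) ^ 2 : ℝ) * ((π / -(z - 1 / (2 * v))) ^ (1 / 2 : ℂ)) ^ 2 *
        cexp ((z * s ^ 2 - (2 * z * s) ^ 2 / (4 * (z - 1 / (2 * v)))) +
          (z * t ^ 2 - (2 * z * t) ^ 2 / (4 * (z - 1 / (2 * v))))) := by
        rw [Complex.exp_add]; simp only [Complex.real_smul]; push_cast; ring
    _ = _ := by
      rw [hsqrt, hK, hb]
      push_cast
      have : (π : ℂ) ≠ 0 := by exact_mod_cast pi_ne_zero
      congr 1
      · field_simp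
      · congr 1
        have hz : z = (1 - (1 - 2 * z * v)) / (2 * v) := by field_simp; ring
        generalize 1 - 2 * z * v = w at hw hz ⊢
        subst hz
        field_simp
        ring

end GaussianQuadraticExp

lemma integral_complexGaussian {E : Type*} [NormedAddCommGroup E] [NormedSpace ℝ E] (v : ℝ)
    (f : ℂ → E) :
    ∫ z, f z ∂complexGaussian v =
      ∫ p : ℝ × ℝ, f (p.1 + p.2 * I)
        ∂(gaussianReal 0 (v / 2).toNNReal).prod (gaussianReal 0 (v / 2).toNNReal) := by
  have he : (fun p : ℝ × ℝ ↦ (p.1 : ℂ) + p.2 * I) = measurableEquivRealProd.symm := by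
    funext p
    apply Complex.ext <;> simp
  rw [complexGaussian, he, integral_map_equiv, ← he]

lemma integral_prod_ofReal_add_mul_I_mul {ν ν' : Measure ℝ} [SFinite ν] [SFinite ν'] {f g : ℝ → ℂ}
    (hf : Integrable f ν) (hxf : Integrable (fun x ↦ x * f x) ν)
    (hg : Integrable g ν') (hyg : Integrable (fun y ↦ y * g y) ν') :
    ∫ p : ℝ × ℝ, (p.1 + p.2 * I) * (f p.1 * g p.2) ∂ν.prod ν' =
      (∫ x, x * f x ∂ν) * (∫ y, g y ∂ν') + I * ((∫ x, f x ∂ν) * ∫ y, y * g y ∂ν') := by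
  have hsplit (p : ℝ × ℝ) : (p.1 + p.2 * I) * (f p.1 * g p.2) =
      (p.1 * f p.1) * g p.2 + I * (f p.1 * (p.2 * g p.2)) := by ring
  simp_rw [hsplit]
  rw [integral_add (hxf.mul_prod hg) ((hf.mul_prod hyg).const_mul I), integral_const_mul,
    integral_prod_mul (fun x ↦ x * f x) g, integral_prod_mul f (fun y ↦ y * g y)]

lemma norm_cexp_I_mul_add_sq (c t x : ℝ) : ‖cexp (I * c * (t + x) ^ 2)‖ = 1 := by
  rw [show I * c * (t + x) ^ 2 = ((c * (t + x) ^ 2 : ℝ) : ℂ) * I by push_cast; ring]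
  exact norm_exp_ofReal_mul_I _

lemma integrable_cexp_I_mul_add_sq {ν : Measure ℝ} [IsFiniteMeasure ν] (c t : ℝ) :
    Integrable (fun x : ℝ ↦ cexp (I * c * (t + x) ^ 2)) ν :=
  (integrable_const (1 : ℝ)).mono' (by fun_prop)
    (.of_forall fun x ↦ (norm_cexp_I_mul_add_sq c t x).le)

lemma integrable_mul_cexp_I_mul_add_sq_gaussianReal (μ : ℝ) (v : ℝ≥0) (c t : ℝ) :
    Integrable (fun x : ℝ ↦ x * cexp (I * c * (t + x) ^ 2)) (gaussianReal μ v) :=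
  ((memLp_id_gaussianReal 1).integrable le_rfl).norm.mono' (by fun_prop) (.of_forall fun x ↦ by
    simp [norm_cexp_I_mul_add_sq])

lemma cexp_I_mul_norm_add_sq (c : ℝ) (a : ℂ) (x y : ℝ) :
    cexp (I * c * ‖a + (x + y * I)‖ ^ 2) =
      cexp (I * c * (a.re + x) ^ 2) * cexp (I * c * (a.im + y) ^ 2) := by
  have hz : a + (x + y * I) = ((a.re + x : ℝ) : ℂ) + ((a.im + y : ℝ) : ℂ) * I := by
    push_cast
    linear_combination -(re_add_im a)
  rw [hz, ← ofReal_pow, Complex.sq_norm, normSq_add_mul_I, ← Complex.exp_add]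
  congr 1
  push_cast
  ring

theorem integral_complexGaussian_mul_cexp_I_mul_norm_add_sq {v : ℝ} (hv : 0 < v) (c : ℝ) (a : ℂ) :
    ∫ z, z * cexp (I * c * ‖a + z‖ ^ 2) ∂complexGaussian v =
      I * c * v * a / (1 - I * c * v) ^ 2 * cexp (I * c * ‖a‖ ^ 2 / (1 - I * c * v)) := by
  set V := (v / 2).toNNReal
  have hV : (V : ℝ) = v / 2 := Real.coe_toNNReal _ (by positivity)
  have hV0 : V ≠ 0 := by simpa [V] using hv
  have hz : 2 * V * (I * c).re < 1 := by simp
  rw [integral_complexGaussian]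
  simp_rw [cexp_I_mul_norm_add_sq]
  rw [integral_prod_ofReal_add_mul_I_mul (integrable_cexp_I_mul_add_sq _ _)
      (integrable_mul_cexp_I_mul_add_sq_gaussianReal _ _ _ _) (integrable_cexp_I_mul_add_sq _ _)
      (integrable_mul_cexp_I_mul_add_sq_gaussianReal _ _ _ _),
    integral_mul_cexp_mul_add_sq_gaussianReal hV0 hz,
    integral_mul_cexp_mul_add_sq_gaussianReal hV0 hz]
  have hprod := integral_cexp_mul_add_sq_gaussianReal_mul hV0 hz a.re a.im
  have hw : 2 * (I * c) * ((V : ℝ) : ℂ) = I * c * v := by rw [hV]; push_cast; ring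
  have hnorm : ((‖a‖ : ℝ) : ℂ) ^ 2 = a.re ^ 2 + a.im ^ 2 := by
    rw [← ofReal_pow, Complex.sq_norm, normSq_apply]; push_cast; ring
  rw [hw] at hprod ⊢
  rw [hnorm]
  generalize 1 - I * c * v = w at hprod ⊢
  linear_combination (I * c * v / w * (a.re + a.im * I)) * hprod +
    (I * c * v / w ^ 2 * cexp (I * c * (a.re ^ 2 + a.im ^ 2) / w)) * re_add_im a

theorem norm_integral_complexGaussian_mul_cexp_I_mul_norm_add_sq {v : ℝ} (hv : 0 < v) (c : ℝ)
    (a : ℂ) :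
    ‖∫ z, z * cexp (I * c * ‖a + z‖ ^ 2) ∂complexGaussian v‖ =
      v * |c| / (1 + v ^ 2 * c ^ 2) * ‖a‖ * rexp (-v * c ^ 2 * ‖a‖ ^ 2 / (1 + v ^ 2 * c ^ 2)) := by
  have hnormSq : normSq (1 - I * c * v) = 1 + v ^ 2 * c ^ 2 := by
    simp only [normSq_apply, sub_re, sub_im, one_re, one_im, mul_re, mul_im, I_re, I_im,
      ofReal_re, ofReal_im]
    ring
  have hden : ‖1 - I * c * v‖ ^ 2 = 1 + v ^ 2 * c ^ 2 := by rw [Complex.sq_norm, hnormSq]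
  have hnum : ‖I * c * v * a‖ = v * |c| * ‖a‖ := by
    rw [norm_mul, norm_mul, norm_mul, norm_I, norm_real, norm_real, Real.norm_eq_abs,
      Real.norm_eq_abs, abs_of_pos hv]
    ring
  have hre : (I * c * ‖a‖ ^ 2 / (1 - I * c * v)).re =
      -v * c ^ 2 * ‖a‖ ^ 2 / (1 + v ^ 2 * c ^ 2) := by
    rw [div_re, hnormSq, ← ofReal_pow]
    simp only [mul_re, mul_im, I_re, I_im, ofReal_re, ofReal_im, sub_re, sub_im, one_re, one_im]
    ring
  rw [integral_complexGaussian_mul_cexp_I_mul_norm_add_sq hv, norm_mul, norm_div, norm_pow,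
    norm_exp, hden, hnum, hre]
  ring

theorem abs_expectation_noise_times_phase_general
    {Ω : Type*} [MeasureSpace Ω] {μ : Measure Ω}
    (σ c : ℝ) (hσ : 0 < σ) (hc : 0 < c) (a : ℂ)
    (n : Ω → ℂ) (hn : Measurable n)
    (hlaw : Measure.map n μ = complexGaussian (σ ^ 2)) :
    ‖∫ ω, n ω * Complex.exp (Complex.I * c * (‖a + n ω‖) ^ 2) ∂μ‖ =
      (σ ^ 2 * c / (1 + σ ^ 4 * c ^ 2)) * ‖a‖ *
        Real.exp (-σ ^ 2 * c ^ 2 * (‖a‖) ^ 2 / (1 + σ ^ 4 * c ^ 2)) := by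
  rw [← integral_map (f := fun z ↦ z * cexp (I * c * ‖a + z‖ ^ 2)) hn.aemeasurable (by fun_prop),
    hlaw, norm_integral_complexGaussian_mul_cexp_I_mul_norm_add_sq (pow_pos hσ 2), abs_of_pos hc,
    show σ ^ 4 = (σ ^ 2) ^ 2 by ring]

theorem abs_expectation_noise_times_phase
    {Ω : Type*} [MeasureSpace Ω] {μ : Measure Ω} [IsProbabilityMeasure μ]
    (σ c : ℝ) (hσ : 0 < σ) (hc : 0 < c) (a : ℂ)
    (n : Ω → ℂ) (hn : Measurable n)
    (hlaw : Measure.map n μ = complexGaussian (σ ^ 2)) :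
    ‖∫ ω, n ω * Complex.exp (Complex.I * c * (‖a + n ω‖) ^ 2) ∂μ‖ =
      (σ ^ 2 * c / (1 + σ ^ 4 * c ^ 2)) * ‖a‖ *
        Real.exp (-σ ^ 2 * c ^ 2 * (‖a‖) ^ 2 / (1 + σ ^ 4 * c ^ 2)) :=
  abs_expectation_noise_times_phase_general σ c hσ hc a n hn hlaw
end

section
/- Let n ∼ CN(0, σ²), a ∈ ℂ, c > 0. Then sup over a ∈ ℂ of |E[n·exp(i·c·|a+n|²)]| = σ/√(2e(1+σ⁴c²)). -/
/-!
Write `n = x + i y` with `x, y` independent `N(0, σ²/2)`. Since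
`|a + n|² = (a.re + x)² + (a.im + y)²`, the expectation factors into one-dimensional chirp
integrals `J₀(t) = E[exp(i c (t + x)²)]` and `J₁(t) = E[x exp(i c (t + x)²)]`, which are Gaussian
integrals of `exp` of a quadratic. Integrating the derivative of that exponential gives
`J₁(t) = (i c σ² t / (1 - i c σ²)) J₀(t)`, so the expectation equals
`(i c σ² / (1 - i c σ²)) a J₀(a.re) J₀(a.im)`, whose modulus is
`σ² c / D · |a| · exp(-σ² c² |a|² / D)` with `D = 1 + σ⁴ c²`. Maximising `r exp(-α r²)` over
`r ≥ 0` gives the value `1 / √(2 e α)`, attained at `r = 1 / √(2 α)`.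
-/

open Real MeasureTheory ProbabilityTheory Complex

open scoped NNReal

lemma abs_le_exp_add_exp_neg (x : ℝ) : |x| ≤ rexp x + rexp (-x) :=
  abs_le.2 ⟨by linarith [add_one_le_exp (-x), exp_pos x],
    by linarith [add_one_le_exp x, exp_pos (-x)]⟩

lemma integrable_ofReal_mul_cexp_quadratic {b : ℂ} (hb : b.re < 0) (β d : ℂ) :
    Integrable (fun x : ℝ => (x : ℂ) * cexp (b * x ^ 2 + β * x + d)) := by
  refine ((integrable_cexp_quadratic' hb (β + 1) d).norm.add
    (integrable_cexp_quadratic' hb (β - 1) d).norm).mono' (by fun_prop)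
    (ae_of_all _ fun x => ?_)
  have hshift (γ : ℂ) : cexp (b * x ^ 2 + (β + γ) * x + d) =
      cexp (b * x ^ 2 + β * x + d) * cexp (γ * x) := by
    rw [← Complex.exp_add]; ring_nf
  simp only [Pi.add_apply]
  rw [sub_eq_add_neg, hshift, hshift, norm_mul, norm_mul, norm_mul, norm_real, Real.norm_eq_abs,
    ← ofReal_one, ← ofReal_neg, ← ofReal_mul, ← ofReal_mul, norm_exp_ofReal, norm_exp_ofReal,
    one_mul, neg_one_mul, ← mul_add, mul_comm]
  gcongr
  exact abs_le_exp_add_exp_neg x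

lemma integral_ofReal_mul_cexp_quadratic {b : ℂ} (hb : b.re < 0) (β d : ℂ) :
    ∫ x : ℝ, (x : ℂ) * cexp (b * x ^ 2 + β * x + d) =
      -β / (2 * b) * ∫ x : ℝ, cexp (b * x ^ 2 + β * x + d) := by
  have hb0 : b ≠ 0 := by rintro rfl; simp at hb
  have hg := integrable_cexp_quadratic' hb β d
  have hxg := integrable_ofReal_mul_cexp_quadratic hb β d
  have hderiv (x : ℝ) : HasDerivAt (fun x : ℝ => cexp (b * x ^ 2 + β * x + d))
      (2 * b * (x * cexp (b * x ^ 2 + β * x + d)) + β * cexp (b * x ^ 2 + β * x + d)) x := by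
    have hq : HasDerivAt (fun z : ℂ => b * z ^ 2 + β * z + d) (2 * b * x + β) x := by
      refine ((((hasDerivAt_pow 2 (x : ℂ)).const_mul b).add
        ((hasDerivAt_id (x : ℂ)).const_mul β)).add_const d).congr_deriv ?_
      push_cast
      ring
    convert hq.cexp.comp_ofReal using 1
    ring
  have h0 := integral_eq_zero_of_hasDerivAt_of_integrable hderiv
    ((hxg.const_mul _).add (hg.const_mul _)) hg
  rw [integral_add (hxg.const_mul _) (hg.const_mul _), integral_const_mul,
    integral_const_mul] at h0
  rw [div_mul_eq_mul_div, eq_div_iff (mul_ne_zero two_ne_zero hb0)]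
  linear_combination h0

lemma norm_cexp_I_mul_mul_add_sq (c t x : ℝ) : ‖cexp (I * c * ((t : ℂ) + x) ^ 2)‖ = 1 := by
  rw [show I * c * ((t : ℂ) + x) ^ 2 = I * ((c * (t + x) ^ 2 : ℝ) : ℂ) by push_cast; ring,
    norm_exp_I_mul_ofReal]

lemma integral_gaussianReal_eq_integral_cexp_mul {v : ℝ≥0} (hv : v ≠ 0) (f : ℝ → ℂ) :
    ∫ x, f x ∂gaussianReal 0 v =
      (√(2 * π * v) : ℂ)⁻¹ * ∫ x : ℝ, cexp (-(x : ℂ) ^ 2 / (2 * (v : ℝ))) * f x := by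
  rw [integral_gaussianReal_eq_integral_smul hv, ← integral_const_mul]
  congr 1 with x
  rw [gaussianPDFReal, Complex.real_smul]
  push_cast
  ring_nf

noncomputable def gaussianChirp (v : ℝ≥0) (c t : ℝ) : ℂ :=
  ∫ x, cexp (I * c * ((t : ℂ) + x) ^ 2) ∂gaussianReal 0 v

section GaussianChirp

variable {v : ℝ≥0} (c t : ℝ)

lemma integrable_cexp_I_mul_mul_add_sq_gaussianReal :
    Integrable (fun x : ℝ => cexp (I * c * ((t : ℂ) + x) ^ 2)) (gaussianReal 0 v) :=
  Integrable.of_bound (by fun_prop) 1 (ae_of_all _ fun x => (norm_cexp_I_mul_mul_add_sq c t x).le)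

lemma integrable_ofReal_mul_cexp_I_mul_mul_add_sq_gaussianReal :
    Integrable (fun x : ℝ => (x : ℂ) * cexp (I * c * ((t : ℂ) + x) ^ 2)) (gaussianReal 0 v) :=
  ((memLp_id_gaussianReal 1).integrable le_rfl).ofReal.mul_bdd (by fun_prop)
    (ae_of_all _ fun x => (norm_cexp_I_mul_mul_add_sq c t x).le)

lemma cexp_neg_sq_div_mul_cexp_I_mul_mul_add_sq (x : ℝ) :
    cexp (-(x : ℂ) ^ 2 / (2 * (v : ℝ))) * cexp (I * c * ((t : ℂ) + x) ^ 2) =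
      cexp ((I * c - (2 * (v : ℝ) : ℂ)⁻¹) * x ^ 2 + 2 * I * c * t * x + I * c * t ^ 2) := by
  rw [← Complex.exp_add]
  congr 1
  ring

lemma re_I_mul_sub_inv : (I * c - (2 * (v : ℝ) : ℂ)⁻¹).re = -(2 * (v : ℝ))⁻¹ := by
  simp [← ofReal_ofNat, ← ofReal_mul, ← ofReal_inv]

lemma im_I_mul_sub_inv : (I * c - (2 * (v : ℝ) : ℂ)⁻¹).im = c := by
  simp [← ofReal_ofNat, ← ofReal_mul, ← ofReal_inv]

lemma re_I_mul_sub_inv_lt_zero (hv : v ≠ 0) : (I * c - (2 * (v : ℝ) : ℂ)⁻¹).re < 0 := by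
  have : 0 < v := pos_iff_ne_zero.2 hv
  rw [re_I_mul_sub_inv, neg_lt_zero]
  positivity

lemma gaussianChirp_eq (hv : v ≠ 0) :
    gaussianChirp v c t = (√(2 * π * v) : ℂ)⁻¹ *
      ((π / -(I * c - (2 * (v : ℝ) : ℂ)⁻¹)) ^ (1 / 2 : ℂ) *
        cexp (I * c * t ^ 2 - (2 * I * c * t) ^ 2 / (4 * (I * c - (2 * (v : ℝ) : ℂ)⁻¹)))) := by
  rw [gaussianChirp, integral_gaussianReal_eq_integral_cexp_mul hv]
  simp_rw [cexp_neg_sq_div_mul_cexp_I_mul_mul_add_sq]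
  rw [integral_cexp_quadratic (re_I_mul_sub_inv_lt_zero c hv)]

lemma integral_ofReal_mul_cexp_I_mul_mul_add_sq_gaussianReal (hv : v ≠ 0) :
    ∫ x, (x : ℂ) * cexp (I * c * ((t : ℂ) + x) ^ 2) ∂gaussianReal 0 v =
      2 * I * c * v * t / (1 - 2 * I * c * v) * gaussianChirp v c t := by
  have hv' : (v : ℂ) ≠ 0 := by exact_mod_cast hv
  have hw : 1 - 2 * I * c * v ≠ 0 := by
    intro h
    simpa using congrArg re h
  rw [gaussianChirp, integral_gaussianReal_eq_integral_cexp_mul hv,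
    integral_gaussianReal_eq_integral_cexp_mul hv]
  simp_rw [mul_left_comm (cexp _) (_ : ℂ), cexp_neg_sq_div_mul_cexp_I_mul_mul_add_sq]
  rw [integral_ofReal_mul_cexp_quadratic (re_I_mul_sub_inv_lt_zero c hv), mul_left_comm]
  have hb : 2 * (I * c - (2 * (v : ℝ) : ℂ)⁻¹) ≠ 0 :=
    mul_ne_zero two_ne_zero fun h => (re_I_mul_sub_inv_lt_zero c hv).ne (by rw [h, zero_re])
  congr 1
  rw [div_eq_div_iff hb hw]
  field_simp
  ring

lemma norm_gaussianChirp (hv : v ≠ 0) :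
    ‖gaussianChirp v c t‖ = (1 + 4 * v ^ 2 * c ^ 2) ^ (-(1 / 4 : ℝ)) *
      rexp (-(2 * v * c ^ 2 * t ^ 2) / (1 + 4 * v ^ 2 * c ^ 2)) := by
  set D : ℝ := 1 + 4 * v ^ 2 * c ^ 2
  have hD : 0 < D := by positivity
  set b : ℂ := I * c - (2 * (v : ℝ) : ℂ)⁻¹
  have hnormSq : normSq b = D / (2 * v) ^ 2 := by
    rw [normSq_apply, re_I_mul_sub_inv, im_I_mul_sub_inv]
    field_simp
    ring
  have hnorm : ‖(π : ℂ) / -b‖ = 2 * π * v / √D := by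
    rw [norm_div, norm_neg, norm_real, norm_of_nonneg pi_pos.le, norm_def, hnormSq,
      sqrt_div' _ (sq_nonneg _), sqrt_sq (by positivity)]
    field_simp
  have hre :
      (I * c * t ^ 2 - (2 * I * c * t) ^ 2 / (4 * b)).re = -(2 * v * c ^ 2 * t ^ 2) / D := by
    rw [show I * c * t ^ 2 - (2 * I * c * t) ^ 2 / (4 * b) =
        I * (c * t ^ 2 : ℝ) + (c ^ 2 * t ^ 2 : ℝ) * b⁻¹ by
      push_cast; ring_nf; rw [I_sq]; ring]
    rw [add_re, I_mul_re, ofReal_im, re_ofReal_mul, inv_re, hnormSq, re_I_mul_sub_inv]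
    field_simp
    ring
  have hpre : (√(2 * π * v))⁻¹ * (2 * π * v / √D) ^ (1 / 2 : ℝ) = D ^ (-(1 / 4 : ℝ)) := by
    rw [div_rpow (by positivity) (sqrt_nonneg _), ← sqrt_eq_rpow, sqrt_eq_rpow D,
      ← rpow_mul hD.le, rpow_neg hD.le]
    field_simp
    norm_num
  rw [gaussianChirp_eq c t hv, norm_mul, norm_mul, norm_inv, norm_real,
    norm_of_nonneg (sqrt_nonneg _), show (1 / 2 : ℂ) = ((1 / 2 : ℝ) : ℂ) by norm_num,
    norm_cpow_real, Complex.norm_exp, hnorm, hre, ← mul_assoc, hpre]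

end GaussianChirp

section ComplexGaussian

variable {v : ℝ} (c : ℝ) (a : ℂ)

lemma integral_mul_cexp_I_mul_mul_norm_add_sq_complexGaussian (hv : 0 < v) :
    ∫ z, z * cexp (I * c * ‖a + z‖ ^ 2) ∂complexGaussian v =
      I * c * v / (1 - I * c * v) * a *
        (gaussianChirp (v / 2).toNNReal c a.re * gaussianChirp (v / 2).toNNReal c a.im) := by
  have hs : (v / 2).toNNReal ≠ 0 := by simpa using hv
  have hs' : (((v / 2).toNNReal : ℝ) : ℂ) = v / 2 := by
    rw [Real.coe_toNNReal _ (by positivity)]; push_cast; ring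
  have hsplit (p : ℝ × ℝ) :
      ((p.1 : ℂ) + p.2 * I) * cexp (I * c * ‖a + (p.1 + p.2 * I)‖ ^ 2) =
        (p.1 * cexp (I * c * ((a.re : ℂ) + p.1) ^ 2)) * cexp (I * c * ((a.im : ℂ) + p.2) ^ 2) +
          I * (cexp (I * c * ((a.re : ℂ) + p.1) ^ 2) *
            (p.2 * cexp (I * c * ((a.im : ℂ) + p.2) ^ 2))) := by
    have hnorm : ‖a + (p.1 + p.2 * I)‖ ^ 2 = (a.re + p.1) ^ 2 + (a.im + p.2) ^ 2 := by
      rw [Complex.sq_norm, normSq_apply]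
      simp only [add_re, add_im, ofReal_re, ofReal_im, mul_re, mul_im, I_re, I_im]
      ring
    rw [← ofReal_pow, hnorm]
    push_cast
    rw [mul_add, Complex.exp_add]
    ring
  rw [complexGaussian, integral_map (by fun_prop) (by fun_prop)]
  simp_rw [hsplit]
  rw [integral_add ((integrable_ofReal_mul_cexp_I_mul_mul_add_sq_gaussianReal c a.re).mul_prod
      (integrable_cexp_I_mul_mul_add_sq_gaussianReal c a.im))
      (((integrable_cexp_I_mul_mul_add_sq_gaussianReal c a.re).mul_prod
        (integrable_ofReal_mul_cexp_I_mul_mul_add_sq_gaussianReal c a.im)).const_mul I),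
    integral_const_mul,
    integral_prod_mul (fun x : ℝ => (x : ℂ) * cexp (I * c * ((a.re : ℂ) + x) ^ 2))
      (fun y : ℝ => cexp (I * c * ((a.im : ℂ) + y) ^ 2)),
    integral_prod_mul (fun x : ℝ => cexp (I * c * ((a.re : ℂ) + x) ^ 2))
      (fun y : ℝ => (y : ℂ) * cexp (I * c * ((a.im : ℂ) + y) ^ 2)),
    integral_ofReal_mul_cexp_I_mul_mul_add_sq_gaussianReal c _ hs,
    integral_ofReal_mul_cexp_I_mul_mul_add_sq_gaussianReal c _ hs, hs']
  rw [← gaussianChirp, ← gaussianChirp]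
  linear_combination (I * c * v / (1 - I * c * v) * gaussianChirp (v / 2).toNNReal c a.re *
    gaussianChirp (v / 2).toNNReal c a.im) * re_add_im a

lemma norm_integral_mul_cexp_I_mul_mul_norm_add_sq_complexGaussian (hv : 0 < v) :
    ‖∫ z, z * cexp (I * c * ‖a + z‖ ^ 2) ∂complexGaussian v‖ =
      v * |c| / (1 + v ^ 2 * c ^ 2) * ‖a‖ *
        rexp (-(v * c ^ 2 * ‖a‖ ^ 2) / (1 + v ^ 2 * c ^ 2)) := by
  have hs : (v / 2).toNNReal ≠ 0 := by simpa using hv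
  have hs' : (((v / 2).toNNReal : ℝ)) = v / 2 := Real.coe_toNNReal _ (by positivity)
  set D := 1 + v ^ 2 * c ^ 2
  have hD : 0 < D := by positivity
  have hw : ‖1 - I * c * v‖ = √D := by
    rw [norm_def, normSq_apply]
    congr 1
    simp only [sub_re, sub_im, one_re, one_im, mul_re, mul_im, I_re, I_im, ofReal_re, ofReal_im]
    ring
  have hk : ‖I * c * v / (1 - I * c * v)‖ = v * |c| / √D := by
    rw [norm_div, hw, norm_mul, norm_mul, norm_I, norm_real, norm_real, Real.norm_eq_abs,
      Real.norm_eq_abs, abs_of_pos hv]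
    ring
  have hroot : D ^ (-(1 / 4 : ℝ)) * D ^ (-(1 / 4 : ℝ)) = (√D)⁻¹ := by
    rw [← rpow_add hD, sqrt_eq_rpow, ← rpow_neg hD.le]
    norm_num
  have hexp : rexp (-(v * c ^ 2 * a.re ^ 2) / D) * rexp (-(v * c ^ 2 * a.im ^ 2) / D) =
      rexp (-(v * c ^ 2 * ‖a‖ ^ 2) / D) := by
    rw [← Real.exp_add, Complex.sq_norm, normSq_apply]
    ring_nf
  rw [integral_mul_cexp_I_mul_mul_norm_add_sq_complexGaussian c a hv, norm_mul, norm_mul,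
    norm_mul, norm_gaussianChirp c _ hs, norm_gaussianChirp c _ hs, hs', hk]
  have hsD : 1 + 4 * (v / 2) ^ 2 * c ^ 2 = D := by ring
  have hsv : 2 * (v / 2) = v := by ring
  simp only [hsD, hsv]
  have hcoef : v * |c| / D = v * |c| / √D * (D ^ (-(1 / 4 : ℝ)) * D ^ (-(1 / 4 : ℝ))) := by
    rw [hroot, ← div_eq_mul_inv, div_div, mul_self_sqrt hD.le]
  rw [← hexp, hcoef]
  ring

end ComplexGaussian

lemma mul_exp_neg_mul_sq_le {α : ℝ} (hα : 0 < α) (r : ℝ) :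
    r * rexp (-(α * r ^ 2)) ≤ (√(2 * rexp 1 * α))⁻¹ := by
  have hsq : (r * rexp (-(α * r ^ 2))) ^ 2 ≤ (2 * rexp 1 * α)⁻¹ := by
    have hmax := mul_exp_neg_le_exp_neg_one (2 * α * r ^ 2)
    rw [Real.exp_neg 1] at hmax
    calc (r * rexp (-(α * r ^ 2))) ^ 2
        = 2 * α * r ^ 2 * rexp (-(2 * α * r ^ 2)) / (2 * α) := by
          rw [mul_pow, ← Real.exp_nat_mul]; field_simp; ring_nf
      _ ≤ (rexp 1)⁻¹ / (2 * α) := by gcongr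
      _ = (2 * rexp 1 * α)⁻¹ := by field_simp
  rw [← sqrt_inv]
  exact (le_abs_self _).trans (abs_le_sqrt hsq)

lemma mul_exp_neg_mul_sq_inv_sqrt {α : ℝ} (hα : 0 < α) :
    (√(2 * α))⁻¹ * rexp (-(α * (√(2 * α))⁻¹ ^ 2)) = (√(2 * rexp 1 * α))⁻¹ := by
  rw [inv_pow, sq_sqrt (by positivity), show α * (2 * α)⁻¹ = 1 / 2 by field_simp, Real.exp_neg,
    exp_half, ← mul_inv, mul_comm (√(2 * α)), ← sqrt_mul (exp_pos 1).le, ← mul_assoc,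
    mul_comm (rexp 1)]

lemma iSup_norm_mul_exp_neg_mul_sq (E : Type*) [NormedAddCommGroup E] [NormedSpace ℝ E]
    [Nontrivial E] {α : ℝ} (hα : 0 < α) :
    ⨆ x : E, ‖x‖ * rexp (-(α * ‖x‖ ^ 2)) = (√(2 * rexp 1 * α))⁻¹ := by
  obtain ⟨x₀, hx₀⟩ := exists_norm_eq E (inv_nonneg.2 (sqrt_nonneg (2 * α)))
  refine le_antisymm (ciSup_le fun x => mul_exp_neg_mul_sq_le hα _) ?_
  refine le_ciSup_of_le ⟨_, Set.forall_mem_range.2 fun x => mul_exp_neg_mul_sq_le hα _⟩ x₀ ?_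
  rw [hx₀, mul_exp_neg_mul_sq_inv_sqrt hα]

theorem sup_abs_expectation_noise_times_phase_general
    {Ω : Type*} [MeasureSpace Ω] {μ : Measure Ω}
    (σ c : ℝ) (hσ : 0 < σ) (hc : 0 < c)
    (n : Ω → ℂ) (hn : Measurable n)
    (hlaw : Measure.map n μ = complexGaussian (σ ^ 2)) :
    (⨆ a : ℂ,
        ‖∫ ω, n ω * Complex.exp (Complex.I * c * (‖a + n ω‖) ^ 2) ∂μ‖) =
      σ / Real.sqrt (2 * Real.exp 1 * (1 + σ ^ 4 * c ^ 2)) := by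
  set D := 1 + σ ^ 4 * c ^ 2 with hD
  have hD_pos : 0 < D := by positivity
  have hlaw_integral (a : ℂ) : ∫ ω, n ω * cexp (I * c * ‖a + n ω‖ ^ 2) ∂μ =
      ∫ z, z * cexp (I * c * ‖a + z‖ ^ 2) ∂complexGaussian (σ ^ 2) := by
    rw [← hlaw, integral_map hn.aemeasurable (by fun_prop)]
  calc _ = ⨆ a : ℂ, σ ^ 2 * c / D * (‖a‖ * rexp (-(σ ^ 2 * c ^ 2 / D * ‖a‖ ^ 2))) := by
        refine iSup_congr fun a => ?_
        rw [hlaw_integral,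
          norm_integral_mul_cexp_I_mul_mul_norm_add_sq_complexGaussian c a (by positivity),
          abs_of_pos hc, show (σ ^ 2) ^ 2 = σ ^ 4 by ring, ← hD, mul_assoc]
        congr 3
        ring
    _ = σ ^ 2 * c / D * (√(2 * rexp 1 * (σ ^ 2 * c ^ 2 / D)))⁻¹ := by
        rw [← Real.mul_iSup_of_nonneg (by positivity),
          iSup_norm_mul_exp_neg_mul_sq ℂ (by positivity)]
    _ = σ / √(2 * rexp 1 * D) := by
        rw [show 2 * rexp 1 * (σ ^ 2 * c ^ 2 / D) = (σ * c / D) ^ 2 * (2 * rexp 1 * D) by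
            field_simp,
          sqrt_mul (sq_nonneg _), sqrt_sq (by positivity)]
        field_simp

theorem sup_abs_expectation_noise_times_phase
    {Ω : Type*} [MeasureSpace Ω] {μ : Measure Ω} [IsProbabilityMeasure μ]
    (σ c : ℝ) (hσ : 0 < σ) (hc : 0 < c)
    (n : Ω → ℂ) (hn : Measurable n)
    (hlaw : Measure.map n μ = complexGaussian (σ ^ 2)) :
    (⨆ a : ℂ,
        ‖∫ ω, n ω * Complex.exp (Complex.I * c * (‖a + n ω‖) ^ 2) ∂μ‖) =
      σ / Real.sqrt (2 * Real.exp 1 * (1 + σ ^ 4 * c ^ 2)) :=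
  sup_abs_expectation_noise_times_phase_general σ c hσ hc n hn hlaw
end

section
/- For a complex random variable X with density, h(X) ≤ h(|X|²) + log π, where h denotes differential entropy (of X viewed as a 2-dimensional real vector on the left, and of the real random variable |X|² on the right). -/
/-!
Gibbs' inequality against the radial density `q z = g (‖z‖²) / π`. Polar coordinates and the
substitution `t = r²` give `∫ q ≤ ∫_{t > 0} g ≤ 1`, hence `h(X) ≤ -E[log q(X)]`, and
`-E[log q(X)] = -E[log g(|X|²)] + log π = h(|X|²) + log π`. Gibbs needs `f = 0` a.e. where
`q = 0`; this holds because `P(g(|X|²) = 0) = ∫_{g = 0} g = 0`.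
-/

open Real MeasureTheory ProbabilityTheory Set

theorem mul_log_le_mul_log_add_log_add_sub {a b c : ℝ} (ha : 0 ≤ a) (hb : 0 ≤ b) (hc : 0 < c)
    (hab : b = 0 → a = 0) :
    a * log b ≤ a * log a + a * log c + (b / c - a) := by
  rcases ha.eq_or_lt with rfl | ha
  · simpa using div_nonneg hb hc.le
  have hb : 0 < b := hb.lt_of_ne fun h => ha.ne' (hab h.symm)
  have hlog := log_le_sub_one_of_pos (show 0 < b / (c * a) by positivity)
  rw [log_div hb.ne' (by positivity), log_mul hc.ne' ha.ne'] at hlog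
  have hscaled := mul_le_mul_of_nonneg_left hlog ha.le
  have hrhs : a * (b / (c * a) - 1) = b / c - a := by field_simp
  linarith

theorem integral_mul_log_le_integral_mul_log_add_log {α : Type*} [MeasurableSpace α]
    {ν : Measure α} {p q : α → ℝ} {c : ℝ} (hc : 0 < c) (hp0 : ∀ x, 0 ≤ p x) (hq0 : ∀ x, 0 ≤ q x)
    (hpq : ∀ᵐ x ∂ν, q x = 0 → p x = 0) (hp : Integrable p ν) (hp1 : ∫ x, p x ∂ν = 1)
    (hq : Integrable q ν) (hqc : ∫ x, q x ∂ν ≤ c)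
    (hplogp : Integrable (fun x => p x * log (p x)) ν)
    (hplogq : Integrable (fun x => p x * log (q x)) ν) :
    ∫ x, p x * log (q x) ∂ν ≤ ∫ x, p x * log (p x) ∂ν + log c := by
  have hlead : Integrable (fun x => p x * log (p x) + p x * log c) ν :=
    hplogp.add (hp.mul_const _)
  have hslack : Integrable (fun x => q x / c - p x) ν := (hq.div_const c).sub hp
  have hmass : (∫ x, q x ∂ν) / c ≤ 1 := (div_le_one hc).mpr hqc
  calc ∫ x, p x * log (q x) ∂ν
      ≤ ∫ x, p x * log (p x) + p x * log c + (q x / c - p x) ∂ν := by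
        refine integral_mono_ae hplogq (hlead.add hslack) ?_
        filter_upwards [hpq] with x hx
        exact mul_log_le_mul_log_add_log_add_sub (hp0 x) (hq0 x) hc hx
    _ = ∫ x, p x * log (p x) ∂ν + log c + ((∫ x, q x ∂ν) / c - 1) := by
        rw [integral_add hlead hslack,
          integral_add hplogp (hp.mul_const _), integral_sub (hq.div_const c) hp,
          integral_mul_const, integral_div, hp1, one_mul]
    _ ≤ ∫ x, p x * log (p x) ∂ν + log c := by linarith

theorem lintegral_Ioi_comp_sq (w : ℝ → ENNReal) :
    ∫⁻ r in Ioi (0 : ℝ), ENNReal.ofReal (2 * r) * w (r ^ 2) = ∫⁻ t in Ioi (0 : ℝ), w t := by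
  have himage : (fun r : ℝ => r ^ 2) '' Ioi 0 = Ioi 0 := by
    ext t
    refine ⟨?_, fun ht => ⟨√t, sqrt_pos.mpr ht, sq_sqrt (le_of_lt ht)⟩⟩
    rintro ⟨r, hr, rfl⟩
    exact pow_pos (mem_Ioi.mp hr) 2
  have hinj : InjOn (fun r : ℝ => r ^ 2) (Ioi 0) :=
    fun r hr s hs h => (pow_left_inj₀ (le_of_lt hr) (le_of_lt hs) two_ne_zero).mp h
  conv_rhs => rw [← himage]
  rw [lintegral_image_eq_lintegral_abs_deriv_mul measurableSet_Ioi
    (fun r _ => by simpa using (hasDerivAt_pow 2 r).hasDerivWithinAt) hinj]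
  refine setLIntegral_congr_fun measurableSet_Ioi fun r (hr : 0 < r) => ?_
  rw [abs_of_pos (by positivity)]

theorem Complex.lintegral_comp_norm_sq {w : ℝ → ENNReal} (hw : Measurable w) :
    ∫⁻ z : ℂ, w (‖z‖ ^ 2) = ENNReal.ofReal π * ∫⁻ t in Ioi (0 : ℝ), w t := by
  have hmeas : Measurable fun p : ℝ × ℝ => ENNReal.ofReal p.1 * w (p.1 ^ 2) := by fun_prop
  rw [← Complex.lintegral_comp_polarCoord_symm, ← lintegral_Ioi_comp_sq]
  simp only [Complex.norm_polarCoord_symm, sq_abs, smul_eq_mul]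
  rw [polarCoord_target, Measure.volume_eq_prod, ← Measure.prod_restrict,
    lintegral_prod _ hmeas.aemeasurable]
  simp only [lintegral_const, Measure.restrict_apply_univ, Real.volume_Ioo]
  rw [← lintegral_const_mul' _ _ ENNReal.ofReal_ne_top]
  refine lintegral_congr fun r => ?_
  rw [sub_neg_eq_add, ← two_mul, ENNReal.ofReal_mul zero_le_two, ENNReal.ofReal_mul zero_le_two]
  ring

theorem Complex.lintegral_ofReal_comp_norm_sq_le {g : ℝ → ℝ} (hg0 : ∀ t, 0 ≤ g t)
    (hgm : Measurable g) (hg : Integrable g) :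
    ∫⁻ z : ℂ, ENNReal.ofReal (g (‖z‖ ^ 2)) ≤ ENNReal.ofReal (π * ∫ t, g t) := by
  rw [Complex.lintegral_comp_norm_sq hgm.ennreal_ofReal, ENNReal.ofReal_mul pi_pos.le,
    ofReal_integral_eq_lintegral_ofReal hg (ae_of_all _ hg0)]
  exact mul_le_mul_right (setLIntegral_le_lintegral _ _) _

theorem Complex.integrable_comp_norm_sq {g : ℝ → ℝ} (hg0 : ∀ t, 0 ≤ g t)
    (hgm : Measurable g) (hg : Integrable g) :
    Integrable fun z : ℂ => g (‖z‖ ^ 2) :=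
  ⟨(hgm.comp (by fun_prop)).aestronglyMeasurable, (hasFiniteIntegral_iff_ofReal
    (ae_of_all _ fun _ => hg0 _)).mpr
    ((Complex.lintegral_ofReal_comp_norm_sq_le hg0 hgm hg).trans_lt ENNReal.ofReal_lt_top)⟩

theorem Complex.integral_comp_norm_sq_le {g : ℝ → ℝ} (hg0 : ∀ t, 0 ≤ g t)
    (hgm : Measurable g) (hg : Integrable g) :
    ∫ z : ℂ, g (‖z‖ ^ 2) ≤ π * ∫ t, g t := by
  rw [integral_eq_lintegral_of_nonneg_ae (ae_of_all _ fun _ => hg0 _)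
    (hgm.comp (by fun_prop)).aestronglyMeasurable]
  exact ENNReal.toReal_le_of_le_ofReal (mul_nonneg pi_pos.le (integral_nonneg hg0))
    (Complex.lintegral_ofReal_comp_norm_sq_le hg0 hgm hg)

section LawWithDensity

variable {Ω α : Type*} [MeasurableSpace Ω] [MeasurableSpace α] {μ : Measure Ω} {ν : Measure α}
  {Y : Ω → α} {d : α → ℝ}

theorem integral_mul_eq_integral_comp_of_map_eq_withDensity (hY : Measurable Y)
    (hd0 : ∀ x, 0 ≤ d x) (hd : Measurable d)
    (hlaw : μ.map Y = ν.withDensity fun x => ENNReal.ofReal (d x)) {φ : α → ℝ}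
    (hφ : Measurable φ) :
    ∫ x, d x * φ x ∂ν = ∫ ω, φ (Y ω) ∂μ := by
  rw [← integral_map hY.aemeasurable hφ.aestronglyMeasurable, hlaw,
    integral_withDensity_eq_integral_toReal_smul hd.ennreal_ofReal
      (ae_of_all _ fun _ => ENNReal.ofReal_lt_top)]
  simp only [ENNReal.toReal_ofReal (hd0 _), smul_eq_mul]

theorem integrable_mul_iff_integrable_comp_of_map_eq_withDensity (hY : Measurable Y)
    (hd0 : ∀ x, 0 ≤ d x) (hd : Measurable d)
    (hlaw : μ.map Y = ν.withDensity fun x => ENNReal.ofReal (d x)) {φ : α → ℝ}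
    (hφ : Measurable φ) :
    Integrable (fun x => d x * φ x) ν ↔ Integrable (fun ω => φ (Y ω)) μ := by
  rw [← Function.comp_def, ← integrable_map_measure hφ.aestronglyMeasurable hY.aemeasurable,
    hlaw, integrable_withDensity_iff_integrable_smul' hd.ennreal_ofReal
      (ae_of_all _ fun _ => ENNReal.ofReal_lt_top)]
  simp only [ENNReal.toReal_ofReal (hd0 _), smul_eq_mul]

theorem integrable_of_map_eq_withDensity [IsProbabilityMeasure μ] (hY : Measurable Y)
    (hd0 : ∀ x, 0 ≤ d x) (hd : Measurable d)
    (hlaw : μ.map Y = ν.withDensity fun x => ENNReal.ofReal (d x)) :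
    Integrable d ν := by
  simpa using (integrable_mul_iff_integrable_comp_of_map_eq_withDensity hY hd0 hd hlaw
    measurable_const (φ := fun _ => 1)).mpr (integrable_const 1)

theorem integral_eq_one_of_map_eq_withDensity [IsProbabilityMeasure μ] (hY : Measurable Y)
    (hd0 : ∀ x, 0 ≤ d x) (hd : Measurable d)
    (hlaw : μ.map Y = ν.withDensity fun x => ENNReal.ofReal (d x)) :
    ∫ x, d x ∂ν = 1 := by
  simpa using integral_mul_eq_integral_comp_of_map_eq_withDensity hY hd0 hd hlaw
    measurable_const (φ := fun _ => 1)

theorem ae_imp_eq_zero_of_map_eq_withDensity {β : Type*} [MeasurableSpace β] {ρ : Measure β}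
    {φ : α → β} {e : β → ℝ} (hY : Measurable Y) (hφ : Measurable φ) (hd0 : ∀ x, 0 ≤ d x)
    (hd : Measurable d) (he : Measurable e)
    (hlaw : μ.map Y = ν.withDensity fun x => ENNReal.ofReal (d x))
    (hlawφ : μ.map (φ ∘ Y) = ρ.withDensity fun t => ENNReal.ofReal (e t)) :
    ∀ᵐ x ∂ν, e (φ x) = 0 → d x = 0 := by
  have hzero : MeasurableSet {t | e t = 0} := he (measurableSet_singleton 0)
  have hnull : (ν.withDensity fun x => ENNReal.ofReal (d x)) (φ ⁻¹' {t | e t = 0}) = 0 := by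
    rw [← hlaw, Measure.map_apply hY (hφ hzero), ← preimage_comp,
      ← Measure.map_apply (hφ.comp hY) hzero, hlawφ,
      withDensity_apply_eq_zero' he.ennreal_ofReal.aemeasurable]
    simp only [ne_eq, ENNReal.ofReal_eq_zero, not_le]
    exact measure_mono_null (fun t ht => (ne_of_gt ht.1) ht.2) measure_empty
  rw [withDensity_apply_eq_zero' hd.ennreal_ofReal.aemeasurable,
    measure_eq_zero_iff_ae_notMem] at hnull
  filter_upwards [hnull] with x hx hex
  by_contra hdx
  exact hx ⟨by simpa using (hd0 x).lt_of_ne' hdx, hex⟩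

end LawWithDensity

/-- For a complex random variable `X` with density `f`, whose squared modulus `|X|²`
has density `g`, we have `h(X) ≤ h(|X|²) + log π`. -/
theorem entropy_complex_le_entropy_abs_sq
    {Ω : Type*} [MeasureSpace Ω] {μ : Measure Ω} [IsProbabilityMeasure μ]
    (X : Ω → ℂ) (hX : Measurable X)
    (f : ℂ → ℝ) (hf0 : ∀ z, 0 ≤ f z) (hfmeas : Measurable f)
    (g : ℝ → ℝ) (hg0 : ∀ t, 0 ≤ g t) (hgmeas : Measurable g)
    (hlawX : Measure.map X μ = (volume : Measure ℂ).withDensity fun z => ENNReal.ofReal (f z))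
    (hlawA : Measure.map (fun ω => ‖X ω‖ ^ 2) μ =
      (volume : Measure ℝ).withDensity fun t => ENNReal.ofReal (g t))
    (hfint : Integrable fun z => f z * Real.log (f z))
    (hgint : Integrable fun t => g t * Real.log (g t)) :
    -∫ z, f z * Real.log (f z) ≤ (-∫ t, g t * Real.log (g t)) + Real.log π := by
  have hnormsq : Measurable fun z : ℂ => ‖z‖ ^ 2 := by fun_prop
  have hA : Measurable fun ω => ‖X ω‖ ^ 2 := hnormsq.comp hX
  have hlogq : Measurable fun z : ℂ => log (g (‖z‖ ^ 2)) := by fun_prop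
  have hg := integrable_of_map_eq_withDensity hA hg0 hgmeas hlawA
  have hradial_le : ∫ z : ℂ, g (‖z‖ ^ 2) ≤ π := by
    simpa [integral_eq_one_of_map_eq_withDensity hA hg0 hgmeas hlawA]
      using Complex.integral_comp_norm_sq_le hg0 hgmeas hg
  have hnull : ∀ᵐ z, g (‖z‖ ^ 2) = 0 → f z = 0 :=
    ae_imp_eq_zero_of_map_eq_withDensity hX hnormsq hf0 hfmeas hgmeas hlawX hlawA
  have hcross_int : Integrable fun z => f z * log (g (‖z‖ ^ 2)) :=
    (integrable_mul_iff_integrable_comp_of_map_eq_withDensity hX hf0 hfmeas hlawX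
      hlogq).mpr
      ((integrable_mul_iff_integrable_comp_of_map_eq_withDensity hA hg0 hgmeas hlawA
        hgmeas.log).mp hgint)
  have hcross : ∫ z, f z * log (g (‖z‖ ^ 2)) = ∫ t, g t * log (g t) := by
    rw [integral_mul_eq_integral_comp_of_map_eq_withDensity hX hf0 hfmeas hlawX hlogq,
      integral_mul_eq_integral_comp_of_map_eq_withDensity hA hg0 hgmeas hlawA hgmeas.log]
  have hgibbs := integral_mul_log_le_integral_mul_log_add_log pi_pos hf0 (fun _ => hg0 _) hnull
    (integrable_of_map_eq_withDensity hX hf0 hfmeas hlawX)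
    (integral_eq_one_of_map_eq_withDensity hX hf0 hfmeas hlawX)
    (Complex.integrable_comp_norm_sq hg0 hgmeas hg) hradial_le hfint hcross_int
  linarith
end
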